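/- Let m be a positive integer, let j be an integer with 1 ≤ j ≤ m, let δ = (2m+1)/(m+1), and let α ∈ [0, (m+1)/(2m+1)]. Then for every strategy Y, H(αδ·V_j^m + (1−αδ)·U_O^m, Y) ≥ 1 − E(Y)·(1/(m+1) + (1−α)/(m(m+1))) + (α/(m+1))·Pr(Y = 2j−1), and equality holds whenever Pr(Y ≥ 2m+1) = 0. -/

import Mathlib

open scoped BigOperators

/-- A (mixed) strategy: a probability distribution on the nonnegative
integers with finite expectation. -/
structure Strategy where
  p : ℕ → ℝ
  nonneg : ∀ n, 0 ≤ p n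
  total : HasSum p 1
  finExp : Summable fun n : ℕ => (n : ℝ) * p n

namespace Strategy

/-- Expectation of a strategy. -/
noncomputable def exp (ξ : Strategy) : ℝ := ∑' n : ℕ, (n : ℝ) * ξ.p n

end Strategy

/-- Probability that an observation from `ξ` strictly exceeds an independent
observation from `η`. -/
noncomputable def prGT (ξ η : Strategy) : ℝ :=
  ∑' n, ξ.p n * ∑ k ∈ Finset.range n, η.p k

/-- Probability that independent observations from `ξ` and `η` are equal. -/
noncomputable def prEq (ξ η : Strategy) : ℝ := ∑' n, ξ.p n * η.p n

/-- Expected all-pay auction payoff of a player with valuation `v` playing `ξ`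
against `η`:  `v·Pr(X > Y) + (v/2)·Pr(X = Y) − E(X)`. -/
noncomputable def payoff (v : ℝ) (ξ η : Strategy) : ℝ :=
  v * prGT ξ η + v / 2 * prEq ξ η - ξ.exp

/-- Nash equilibrium of the two-player all-pay auction with valuations `(v1, v2)`. -/
def IsNashAPA (v1 v2 : ℝ) (X Y : Strategy) : Prop :=
  (∀ X' : Strategy, payoff v1 X' Y ≤ payoff v1 X Y) ∧
  (∀ Y' : Strategy, payoff v2 Y' X ≤ payoff v2 Y X)

/-- `H(ξ, η) = Pr(X > Y) − Pr(X < Y)`. -/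
noncomputable def Hval (ξ η : Strategy) : ℝ := prGT ξ η - prGT η ξ

/-- Nash equilibrium of the discrete General Lotto game `Γ(b1, b2)`. -/
def IsNashLotto (b1 b2 : ℝ) (X Y : Strategy) : Prop :=
  X.exp = b1 ∧ Y.exp = b2 ∧
  (∀ X' : Strategy, X'.exp = b1 → Hval X' Y ≤ Hval X Y) ∧
  (∀ Y' : Strategy, Y'.exp = b2 → Hval Y' X ≤ Hval Y X)

/-- `U_O^m`: uniform distribution on the odd numbers `{1, 3, …, 2m−1}` (as a pmf). -/
noncomputable def UO (m : ℕ) : ℕ → ℝ := fun n =>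
  if Odd n ∧ n < 2 * m then (m : ℝ)⁻¹ else 0

/-- `U_E^m`: uniform distribution on the even numbers `{0, 2, …, 2m}` (as a pmf). -/
noncomputable def UE (m : ℕ) : ℕ → ℝ := fun n =>
  if Even n ∧ n ≤ 2 * m then ((m : ℝ) + 1)⁻¹ else 0

/-- `U_{O↑1}^m`: uniform distribution on the even numbers `{2, 4, …, 2m−2}` (as a pmf). -/
noncomputable def UOup (m : ℕ) : ℕ → ℝ := fun n =>
  if Even n ∧ 0 < n ∧ n ≤ 2 * m - 2 then ((m : ℝ) - 1)⁻¹ else 0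

/-- `δ_j`: the point mass at `j` (as a pmf). -/
noncomputable def deltaFn (j : ℕ) : ℕ → ℝ := fun n => if n = j then 1 else 0

/-- `W_j^m = (1/(2m))·δ_0 + Σ_{i=1}^{j−1}(1/m)·δ_{2i} + (1/(2m))·δ_{2j}
      + Σ_{i=j+1}^{m}(1/m)·δ_{2i−1}` (as a pmf). -/
noncomputable def Wfn (j m : ℕ) : ℕ → ℝ := fun n =>
  if n = 0 ∨ n = 2 * j then (2 * (m : ℝ))⁻¹
  else if Even n ∧ n < 2 * j then (m : ℝ)⁻¹
  else if Odd n ∧ 2 * j < n ∧ n < 2 * m then (m : ℝ)⁻¹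
  else 0

/-- `V_j^m = Σ_{i=1}^{j−1}(2/(2m+1))·δ_{2i−1} + (1/(2m+1))·δ_{2j−1}
      + Σ_{i=j}^{m}(2/(2m+1))·δ_{2i}` (as a pmf). -/
noncomputable def Vfn (j m : ℕ) : ℕ → ℝ := fun n =>
  if n = 2 * j - 1 then (2 * (m : ℝ) + 1)⁻¹
  else if Odd n ∧ n < 2 * j - 1 then 2 * (2 * (m : ℝ) + 1)⁻¹
  else if Even n ∧ 2 * j ≤ n ∧ n ≤ 2 * m then 2 * (2 * (m : ℝ) + 1)⁻¹
  else 0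

/-!
`H(Z, Y)` is linear in `Y`: it is `∑ₖ Pr(Y = k) · H(Z, δₖ)`. Going from `k` to `k + 1`,
`H(Z, δₖ) = Pr(Z > k) − Pr(Z < k)` drops by `Z(k) + Z(k+1)`, and for this mixture every such
pair sum equals `c = 1/(m+1) + (1−α)/(m(m+1))`, up to a correction `±α/(m+1)` next to the
half-weight atom `2j − 1` of `V_j^m`. Hence `H(Z, δₖ) = 1 − c k + α/(m+1)·[k = 2j−1]` on
`{0, …, 2m}`, while beyond `2m` it is `−1 ≥ 1 − c k`, because `c (2m+1) ≥ 2` is exactly the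
condition `α ≤ (m+1)/(2m+1)`.
-/

namespace Strategy

noncomputable def probLT (ξ : Strategy) (k : ℕ) : ℝ := ∑ n ∈ Finset.range k, ξ.p n

/-- `H(ξ, δ_k) = Pr(ξ > k) − Pr(ξ < k)`. -/
noncomputable def HvalPure (ξ : Strategy) (k : ℕ) : ℝ := 1 - ξ.probLT (k + 1) - ξ.probLT k

variable (ξ η : Strategy)

lemma probLT_nonneg (k : ℕ) : 0 ≤ ξ.probLT k :=
  Finset.sum_nonneg fun n _ => ξ.nonneg n

lemma probLT_le_one (k : ℕ) : ξ.probLT k ≤ 1 :=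
  sum_le_hasSum _ (fun n _ => ξ.nonneg n) ξ.total

lemma probLT_succ_succ (k : ℕ) :
    ξ.probLT (k + 2) = ξ.probLT k + (ξ.p k + ξ.p (k + 1)) := by
  simp only [probLT, Finset.sum_range_succ, add_assoc]

lemma probLT_eq_one {N : ℕ} (hξ : ∀ n, N < n → ξ.p n = 0) {k : ℕ} (hk : N < k) :
    ξ.probLT k = 1 :=
  (ξ.total.unique (hasSum_sum_of_ne_finset_zero fun n hn =>
    hξ n (by simp only [Finset.mem_range] at hn; omega))).symm

lemma hasSum_ite_lt (k : ℕ) :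
    HasSum (fun n => if k < n then ξ.p n else 0) (1 - ξ.probLT (k + 1)) := by
  rw [← hasSum_nat_add_iff' (k + 1), Finset.sum_eq_zero fun n hn => if_neg (by simp at hn; omega),
    sub_zero]
  simp only [show ∀ n, k < n + (k + 1) from fun n => by omega, if_true]
  exact (hasSum_nat_add_iff' (k + 1)).mpr ξ.total

lemma summable_mul_of_abs_le {c : ℕ → ℝ} {C : ℝ} (hc : ∀ k, |c k| ≤ C) :
    Summable fun k => η.p k * c k :=
  (η.total.summable.mul_right C).of_norm_bounded fun k => by
    rw [Real.norm_eq_abs, abs_mul, abs_of_nonneg (η.nonneg k)]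
    exact mul_le_mul_of_nonneg_left (hc k) (η.nonneg k)

lemma prGT_eq_tsum : prGT ξ η = ∑' k, η.p k * (1 - ξ.probLT (k + 1)) := by
  set f : ℕ → ℕ → ℝ := fun n k => if k < n then ξ.p n * η.p k else 0
  have hf : Summable (Function.uncurry f) :=
    (ξ.total.summable.mul_of_nonneg η.total.summable ξ.nonneg η.nonneg).of_nonneg_of_le
      (fun x => by
        dsimp only [f, Function.uncurry]; split_ifs
        exacts [mul_nonneg (ξ.nonneg _) (η.nonneg _), le_rfl])
      (fun x => by
        dsimp only [f, Function.uncurry]; split_ifs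
        exacts [le_rfl, mul_nonneg (ξ.nonneg _) (η.nonneg _)])
  have hrow (n : ℕ) : ∑' k, f n k = ξ.p n * ∑ k ∈ Finset.range n, η.p k := by
    rw [tsum_eq_sum (s := Finset.range n) fun k hk => if_neg (by simpa using hk),
      Finset.mul_sum]
    exact Finset.sum_congr rfl fun k hk => if_pos (Finset.mem_range.mp hk)
  have hcol (k : ℕ) : ∑' n, f n k = η.p k * (1 - ξ.probLT (k + 1)) := by
    refine (((ξ.hasSum_ite_lt k).mul_left (η.p k)).congr_fun fun n => ?_).tsum_eq
    dsimp only [f]; split_ifs <;> ring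
  simp only [prGT, ← hrow, ← hcol]
  exact hf.tsum_comm.symm

lemma hasSum_HvalPure : HasSum (fun k => η.p k * ξ.HvalPure k) (Hval ξ η) := by
  have hgt := η.summable_mul_of_abs_le (c := fun k => 1 - ξ.probLT (k + 1)) (C := 1) fun k =>
    abs_le.mpr ⟨by linarith [ξ.probLT_le_one (k + 1)], by linarith [ξ.probLT_nonneg (k + 1)]⟩
  have hlt := η.summable_mul_of_abs_le (c := ξ.probLT) (C := 1) fun k =>
    abs_le.mpr ⟨by linarith [ξ.probLT_nonneg k], ξ.probLT_le_one k⟩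
  rw [Hval, prGT_eq_tsum, prGT]
  exact (hgt.hasSum.sub hlt.hasSum).congr_fun fun k => by rw [HvalPure]; ring

lemma hasSum_mul_affine (a b e : ℝ) (i : ℕ) :
    HasSum (fun k => η.p k * (a - k * b + e * if k = i then 1 else 0))
      (a - η.exp * b + e * η.p i) := by
  have h := ((η.total.mul_left a).sub (η.finExp.hasSum.mul_right b)).add
    (hasSum_ite_eq i (e * η.p i))
  rw [mul_one] at h
  refine h.congr_fun fun k => ?_
  split_ifs with hk
  · subst hk; ring
  · ring

lemma HvalPure_eq_neg_one {N : ℕ} (hξ : ∀ n, N < n → ξ.p n = 0) {k : ℕ} (hk : N < k) :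
    ξ.HvalPure k = -1 := by
  rw [HvalPure, ξ.probLT_eq_one hξ hk, ξ.probLT_eq_one hξ (by omega)]
  norm_num

lemma HvalPure_succ (k : ℕ) :
    ξ.HvalPure (k + 1) = ξ.HvalPure k - (ξ.p k + ξ.p (k + 1)) := by
  rw [HvalPure, HvalPure, probLT_succ_succ]
  ring

lemma HvalPure_eq_of_add_succ {N : ℕ} {c : ℝ} {g : ℕ → ℝ}
    (hpair : ∀ k < N, ξ.p k + ξ.p (k + 1) = c + g k - g (k + 1)) :
    ∀ k ≤ N, ξ.HvalPure k = 1 - ξ.p 0 - g 0 - k * c + g k := by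
  intro k hk
  induction k with
  | zero => simp [HvalPure, probLT]
  | succ k ih =>
    rw [HvalPure_succ, ih (by omega), hpair k (by omega)]
    push_cast
    ring

end Strategy

lemma UO_zero (m : ℕ) : UO m 0 = 0 := by
  simp [UO]

lemma UO_eq_zero {m n : ℕ} (hn : 2 * m < n) : UO m n = 0 :=
  if_neg fun h => by omega

lemma UO_add_UO_succ {m k : ℕ} (hk : k < 2 * m) : UO m k + UO m (k + 1) = (m : ℝ)⁻¹ := by
  simp only [UO, Nat.odd_iff]
  split_ifs <;> first | omega | ring

lemma Vfn_zero {j : ℕ} (hj : 1 ≤ j) (m : ℕ) : Vfn j m 0 = 0 := by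
  simp only [Vfn]
  split_ifs with h0 hodd heven
  exacts [absurd h0 (by omega), absurd hodd.1 (by simp), absurd heven.2.1 (by omega), rfl]

lemma Vfn_eq_zero {j m n : ℕ} (hjm : j ≤ m) (hn : 2 * m < n) : Vfn j m n = 0 := by
  simp only [Vfn, Nat.odd_iff, Nat.even_iff]
  split_ifs <;> first | omega | rfl

lemma Vfn_add_Vfn_succ {j m k : ℕ} (hj : 1 ≤ j) (hk : k < 2 * m) :
    Vfn j m k + Vfn j m (k + 1) = 2 * (2 * (m : ℝ) + 1)⁻¹ +
      (2 * (m : ℝ) + 1)⁻¹ * ((if k = 2 * j - 1 then 1 else 0) -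
        (if k + 1 = 2 * j - 1 then 1 else 0)) := by
  simp only [Vfn, Nat.odd_iff, Nat.even_iff]
  split_ifs <;> first | omega | ring

noncomputable def mixSlope (m : ℕ) (α : ℝ) : ℝ :=
  1 / ((m : ℝ) + 1) + (1 - α) / ((m : ℝ) * ((m : ℝ) + 1))

lemma two_le_mul_mixSlope {m k : ℕ} {α : ℝ} (hm : 1 ≤ m)
    (hα : α ≤ ((m : ℝ) + 1) / (2 * (m : ℝ) + 1)) (hk : 2 * m < k) :
    2 ≤ k * mixSlope m α := by
  have hm' : (1 : ℝ) ≤ m := by exact_mod_cast hm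
  have hk' : 2 * (m : ℝ) + 1 ≤ k := by exact_mod_cast hk
  rw [le_div_iff₀ (by positivity)] at hα
  have hslope : 2 ≤ (2 * (m : ℝ) + 1) * mixSlope m α := by
    have h : (2 * (m : ℝ) + 1) * mixSlope m α - 2 =
        ((m : ℝ) + 1 - α * (2 * (m : ℝ) + 1)) / ((m : ℝ) * ((m : ℝ) + 1)) := by
      rw [mixSlope]; field_simp; ring
    have : 0 ≤ ((m : ℝ) + 1 - α * (2 * (m : ℝ) + 1)) / ((m : ℝ) * ((m : ℝ) + 1)) :=
      div_nonneg (by linarith) (by positivity)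
    linarith
  nlinarith

noncomputable def mixFn (j m : ℕ) (α : ℝ) : ℕ → ℝ := fun n =>
  α * ((2 * (m : ℝ) + 1) / ((m : ℝ) + 1)) * Vfn j m n +
    (1 - α * ((2 * (m : ℝ) + 1) / ((m : ℝ) + 1))) * UO m n

section mixture

variable {m j : ℕ} {α : ℝ}

lemma mixFn_zero (hj : 1 ≤ j) : mixFn j m α 0 = 0 := by
  simp only [mixFn, Vfn_zero hj, UO_zero, mul_zero, add_zero]

lemma mixFn_eq_zero (hjm : j ≤ m) (n : ℕ) (hn : 2 * m < n) : mixFn j m α n = 0 := by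
  simp only [mixFn, Vfn_eq_zero hjm hn, UO_eq_zero hn, mul_zero, add_zero]

lemma mixFn_add_succ (hj : 1 ≤ j) {k : ℕ} (hk : k < 2 * m) :
    mixFn j m α k + mixFn j m α (k + 1) =
      mixSlope m α + α / ((m : ℝ) + 1) * (if k = 2 * j - 1 then 1 else 0) -
        α / ((m : ℝ) + 1) * (if k + 1 = 2 * j - 1 then 1 else 0) := by
  have hm : (1 : ℝ) ≤ m := by exact_mod_cast (show 1 ≤ m by omega)
  calc mixFn j m α k + mixFn j m α (k + 1)
      = α * ((2 * (m : ℝ) + 1) / ((m : ℝ) + 1)) * (Vfn j m k + Vfn j m (k + 1)) +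
          (1 - α * ((2 * (m : ℝ) + 1) / ((m : ℝ) + 1))) * (UO m k + UO m (k + 1)) := by
        simp only [mixFn]; ring
    _ = _ := by
        rw [Vfn_add_Vfn_succ hj hk, UO_add_UO_succ hk, mixSlope]
        field_simp
        ring

variable {Z : Strategy}

lemma HvalPure_eq_of_eq_mixFn (hj : 1 ≤ j) (hZ : ∀ n, Z.p n = mixFn j m α n)
    {k : ℕ} (hk : k ≤ 2 * m) :
    Z.HvalPure k = 1 - k * mixSlope m α + α / ((m : ℝ) + 1) * if k = 2 * j - 1 then 1 else 0 := by
  rw [Z.HvalPure_eq_of_add_succ (g := fun k => α / ((m : ℝ) + 1) * if k = 2 * j - 1 then 1 else 0)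
    (fun k hk => by rw [hZ, hZ]; exact mixFn_add_succ hj hk) k hk, hZ, mixFn_zero hj,
    if_neg (by omega)]
  ring

lemma HvalPure_ge_of_eq_mixFn (hj : 1 ≤ j) (hjm : j ≤ m)
    (hα : α ≤ ((m : ℝ) + 1) / (2 * (m : ℝ) + 1)) (hZ : ∀ n, Z.p n = mixFn j m α n) (k : ℕ) :
    1 - k * mixSlope m α + α / ((m : ℝ) + 1) * (if k = 2 * j - 1 then 1 else 0) ≤
      Z.HvalPure k := by
  rcases le_or_gt k (2 * m) with hk | hk
  · exact (HvalPure_eq_of_eq_mixFn hj hZ hk).ge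
  · rw [Z.HvalPure_eq_neg_one (fun n hn => (hZ n).trans (mixFn_eq_zero hjm n hn)) hk,
      if_neg (by omega)]
    linarith [two_le_mul_mixSlope (by omega) hα hk]

end mixture

theorem h_lower_bound_mix_general (m : ℕ) (j : ℕ) (hj1 : 1 ≤ j) (hjm : j ≤ m)
    (α : ℝ) (hα1 : α ≤ ((m : ℝ) + 1) / (2 * (m : ℝ) + 1))
    (Z : Strategy)
    (hZ : ∀ n, Z.p n = α * ((2 * (m : ℝ) + 1) / ((m : ℝ) + 1)) * Vfn j m n +
      (1 - α * ((2 * (m : ℝ) + 1) / ((m : ℝ) + 1))) * UO m n)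
    (Y : Strategy) :
    1 - Y.exp * (1 / ((m : ℝ) + 1) + (1 - α) / ((m : ℝ) * ((m : ℝ) + 1))) +
        (α / ((m : ℝ) + 1)) * Y.p (2 * j - 1) ≤ Hval Z Y ∧
    ((∀ n, 2 * m + 1 ≤ n → Y.p n = 0) →
      Hval Z Y =
        1 - Y.exp * (1 / ((m : ℝ) + 1) + (1 - α) / ((m : ℝ) * ((m : ℝ) + 1))) +
          (α / ((m : ℝ) + 1)) * Y.p (2 * j - 1)) := by
  have hH := Z.hasSum_HvalPure Y
  have hL := Y.hasSum_mul_affine 1 (mixSlope m α) (α / ((m : ℝ) + 1)) (2 * j - 1)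
  refine ⟨hasSum_le (fun k => mul_le_mul_of_nonneg_left
    (HvalPure_ge_of_eq_mixFn hj1 hjm hα1 hZ k) (Y.nonneg k)) hL hH,
    fun hY => hH.unique (hL.congr_fun fun k => ?_)⟩
  rcases le_or_gt k (2 * m) with hk | hk
  · rw [HvalPure_eq_of_eq_mixFn hj1 hZ hk]
  · rw [hY k hk, zero_mul, zero_mul]

/-- lower bound for `H(αδ·V_j^m + (1−αδ)·U_O^m, Y)`, with equality
whenever `Y` puts no mass on `{2m+1, 2m+2, …}`. -/
theorem h_lower_bound_mix (m : ℕ) (hm : 1 ≤ m) (j : ℕ) (hj1 : 1 ≤ j) (hjm : j ≤ m)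
    (α : ℝ) (hα0 : 0 ≤ α) (hα1 : α ≤ ((m : ℝ) + 1) / (2 * (m : ℝ) + 1))
    (Z : Strategy)
    (hZ : ∀ n, Z.p n = α * ((2 * (m : ℝ) + 1) / ((m : ℝ) + 1)) * Vfn j m n +
      (1 - α * ((2 * (m : ℝ) + 1) / ((m : ℝ) + 1))) * UO m n)
    (Y : Strategy) :
    1 - Y.exp * (1 / ((m : ℝ) + 1) + (1 - α) / ((m : ℝ) * ((m : ℝ) + 1))) +
        (α / ((m : ℝ) + 1)) * Y.p (2 * j - 1) ≤ Hval Z Y ∧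
    ((∀ n, 2 * m + 1 ≤ n → Y.p n = 0) →
      Hval Z Y =
        1 - Y.exp * (1 / ((m : ℝ) + 1) + (1 - α) / ((m : ℝ) * ((m : ℝ) + 1))) +
          (α / ((m : ℝ) + 1)) * Y.p (2 * j - 1)) :=
  h_lower_bound_mix_general m j hj1 hjm α hα1 Z hZ Y
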